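/- arXiv:2501.06517 — 3 statements merged into one kernel-verified Lean document; each statement's English description precedes it below -/
import Mathlib

section
/- Let X be a real normed space, let T be a bimonotone multivalued operator from X to X*, and let (u, u*) be an element of the graph of T. Let V be the linear span of {x - u : x ∈ dom T}. Then there exists a linear map A from V to the space of (not necessarily continuous) linear functionals on V which is skew symmetric (i.e. ⟨A x, y⟩ = -⟨A y, x⟩ for all x, y ∈ V) such that for every (x, x*) in the graph of T and every v ∈ V one has ⟨x* - u*, v⟩ = ⟨A (x - u), v⟩. -/
/-!
Translating the graph by `(u, u*)` turns bimonotonicity into skewness of the pairing: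
`⟨x* - u*, y - u⟩ = -⟨y* - u*, x - u⟩` for all `(x, x*), (y, y*)` in the graph. Extend
`x - u ↦ (x* - u*)|_V` linearly along formal combinations. This is well defined: if
`∑ cᵢ (xᵢ - u) = 0`, then by skewness `∑ cᵢ (xᵢ* - u*)` vanishes on every generator `y - u`,
hence on `V`. The same identity, extended bilinearly, makes the resulting `A` skew.
-/

theorem LinearMap.exists_comp_eq_of_surjective_of_ker_le {R P N Q : Type*} [Ring R]
    [AddCommGroup P] [Module R P] [AddCommGroup N] [Module R N] [AddCommGroup Q] [Module R Q]
    {π : P →ₗ[R] N} (hπ : Function.Surjective π) {ψ : P →ₗ[R] Q} (h : ker π ≤ ker ψ) :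
    ∃ A : N →ₗ[R] Q, ∀ c, A (π c) = ψ c :=
  ⟨(ker π).liftQ ψ h ∘ₗ (π.quotKerEquivOfSurjective hπ).symm.toLinearMap, fun c => by
    simp [quotKerEquivOfSurjective_symm_apply]⟩

section SkewFamily

variable {R M ι : Type*} [CommRing R] [AddCommGroup M] [Module R M]
  {a : ι → M} {f : ι → M →ₗ[R] R}

theorem linearCombination_apply_linearCombination_eq_neg
    (hskew : ∀ i j, f i (a j) = -f j (a i)) (c d : ι →₀ R) :
    Finsupp.linearCombination R f c (Finsupp.linearCombination R a d) =
      -Finsupp.linearCombination R f d (Finsupp.linearCombination R a c) := by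
  simp only [Finsupp.linearCombination_apply, Finsupp.sum, map_sum, map_smul, LinearMap.coe_sum,
    Finset.sum_apply, LinearMap.smul_apply, smul_eq_mul, Finset.mul_sum]
  rw [Finset.sum_comm, ← Finset.sum_neg_distrib]
  refine Finset.sum_congr rfl fun i _ => ?_
  rw [← Finset.sum_neg_distrib]
  refine Finset.sum_congr rfl fun j _ => ?_
  rw [hskew]
  ring

theorem exists_skew_linearMap_on_span_of_apply_eq_neg (V : Submodule R M)
    (hV : Submodule.span R (Set.range a) = V) (hskew : ∀ i j, f i (a j) = -f j (a i)) :
    ∃ A : V →ₗ[R] V →ₗ[R] R, (∀ x y, A x y = -A y x) ∧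
      ∀ i (hi : a i ∈ V) (v : V), f i v = A ⟨a i, hi⟩ v := by
  rw [← Finsupp.range_linearCombination] at hV
  let π : (ι →₀ R) →ₗ[R] V :=
    (Finsupp.linearCombination R a).codRestrict V fun c => hV ▸ LinearMap.mem_range_self _ c
  let ψ : (ι →₀ R) →ₗ[R] V →ₗ[R] R :=
    LinearMap.lcomp R R V.subtype ∘ₗ Finsupp.linearCombination R f
  have hψπ (c d : ι →₀ R) : ψ c (π d) = -ψ d (π c) :=
    linearCombination_apply_linearCombination_eq_neg hskew c d
  have hπ : Function.Surjective π := by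
    rintro ⟨v, hv⟩
    rw [← hV] at hv
    obtain ⟨c, rfl⟩ := hv
    exact ⟨c, rfl⟩
  have hker : LinearMap.ker π ≤ LinearMap.ker ψ := by
    intro c hc
    rw [LinearMap.mem_ker] at hc ⊢
    ext w
    obtain ⟨d, rfl⟩ := hπ w
    simp [hψπ, hc]
  obtain ⟨A, hA⟩ := LinearMap.exists_comp_eq_of_surjective_of_ker_le hπ hker
  refine ⟨A, fun x y => ?_, fun i hi v => ?_⟩
  · obtain ⟨c, rfl⟩ := hπ x
    obtain ⟨d, rfl⟩ := hπ y
    rw [hA, hA, hψπ]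
  · have hai : (⟨a i, hi⟩ : V) = π (Finsupp.single i 1) := Subtype.ext (by simp [π])
    simp [hai, hA, ψ]

end SkewFamily

theorem sub_apply_sub_eq_neg_of_bimonotone {X : Type*} [NormedAddCommGroup X] [NormedSpace ℝ X]
    {T : Set (X × (X →L[ℝ] ℝ))} (hbi : ∀ p ∈ T, ∀ q ∈ T, (p.2 - q.2) (p.1 - q.1) = 0)
    {u : X} {ustar : X →L[ℝ] ℝ} (hu : (u, ustar) ∈ T) {p q : X × (X →L[ℝ] ℝ)}
    (hp : p ∈ T) (hq : q ∈ T) :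
    (p.2 - ustar) (q.1 - u) = -(q.2 - ustar) (p.1 - u) := by
  have hpq := hbi p hp q hq
  have hpu := hbi p hp _ hu
  have hqu := hbi q hq _ hu
  simp only [sub_apply, map_sub] at hpq hpu hqu ⊢
  linarith

/-- Any bimonotone operator `T : X ⇉ X*` with `(u, u*)` in its graph coincides,
up to translation, with a skew symmetric linear operator on the span `V` of `dom T - u`. -/
theorem stmt0 (X : Type*) [NormedAddCommGroup X] [NormedSpace ℝ X]
    (T : Set (X × (X →L[ℝ] ℝ)))
    (hbi : ∀ p ∈ T, ∀ q ∈ T, (p.2 - q.2) (p.1 - q.1) = 0)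
    (u : X) (ustar : X →L[ℝ] ℝ) (hu : (u, ustar) ∈ T) :
    ∃ A : (Submodule.span ℝ ((fun x => x - u) '' {x | ∃ xstar, (x, xstar) ∈ T})) →ₗ[ℝ]
        ((Submodule.span ℝ ((fun x => x - u) '' {x | ∃ xstar, (x, xstar) ∈ T})) →ₗ[ℝ] ℝ),
      (∀ x y, A x y = - A y x) ∧
      (∀ (x : X) (xstar : X →L[ℝ] ℝ) (hx : (x, xstar) ∈ T),
        ∀ v : (Submodule.span ℝ ((fun x => x - u) '' {x | ∃ xstar, (x, xstar) ∈ T})),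
          (xstar - ustar) (v : X) =
            A ⟨x - u, Submodule.subset_span ⟨x, ⟨xstar, hx⟩, rfl⟩⟩ v) := by
  have hrange : Set.range (fun p : T => p.1.1 - u) =
      (fun x => x - u) '' {x | ∃ xstar, (x, xstar) ∈ T} := by
    ext
    simp
  obtain ⟨A, hA_skew, hA⟩ := exists_skew_linearMap_on_span_of_apply_eq_neg
    (f := fun p : T => ((p.1.2 - ustar : X →L[ℝ] ℝ) : X →ₗ[ℝ] ℝ)) _
    (congrArg (Submodule.span ℝ) hrange)
    fun p q => sub_apply_sub_eq_neg_of_bimonotone hbi hu p.2 q.2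
  exact ⟨A, hA_skew, fun x xstar hx => hA ⟨(x, xstar), hx⟩ _⟩
end

section
/- Let X be a real normed space and let T be a bimonotone multivalued operator from X to X* such that (0, 0) belongs to the graph of T. If x ∈ dom T and x₁*, x₂* ∈ T(x), then x₁* and x₂* agree on the linear span of dom T, i.e. ⟨x₁* - x₂*, v⟩ = 0 for every v in the span of dom T. -/
/-! The bimonotonicity relations of `(x, x₁*)` and `(x, x₂*)` against any `(y, y*)` in the graph
subtract to `⟨x₁* - x₂*, x - y⟩ = 0`. Taking `(y, y*) = (0, 0)` gives `⟨x₁* - x₂*, x⟩ = 0`, hence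
`x₁* - x₂*` vanishes on `dom T`, and so on its linear span. -/

section Bimonotone

variable {R M : Type*} [CommRing R] [TopologicalSpace R] [IsTopologicalAddGroup R]
  [AddCommGroup M] [TopologicalSpace M] [Module R M]

def IsBimonotone (T : Set (M × (M →L[R] R))) : Prop :=
  ∀ p ∈ T, ∀ q ∈ T, (p.2 - q.2) (p.1 - q.1) = 0

namespace IsBimonotone

variable {T : Set (M × (M →L[R] R))} (hT : IsBimonotone T)
include hT

theorem sub_apply_sub_eq_zero {x y : M} {a b c : M →L[R] R}
    (ha : (x, a) ∈ T) (hb : (x, b) ∈ T) (hc : (y, c) ∈ T) : (a - b) (x - y) = 0 := by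
  have hac := hT _ ha _ hc
  have hbc := hT _ hb _ hc
  simp only [sub_apply] at hac hbc ⊢
  linear_combination hac - hbc

theorem sub_apply_eq_zero_of_mem (h0 : ((0 : M), (0 : M →L[R] R)) ∈ T) {x y : M}
    {a b c : M →L[R] R} (ha : (x, a) ∈ T) (hb : (x, b) ∈ T) (hc : (y, c) ∈ T) :
    (a - b) y = 0 := by
  have hx : (a - b) x = 0 := by simpa using hT.sub_apply_sub_eq_zero ha hb h0
  have hxy := hT.sub_apply_sub_eq_zero ha hb hc
  rw [map_sub, hx, zero_sub, neg_eq_zero] at hxy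
  exact hxy

theorem span_dom_le_ker_sub (h0 : ((0 : M), (0 : M →L[R] R)) ∈ T) {x : M}
    {a b : M →L[R] R} (ha : (x, a) ∈ T) (hb : (x, b) ∈ T) :
    Submodule.span R {y | ∃ c, (y, c) ∈ T} ≤ LinearMap.ker ((a - b : M →L[R] R) : M →ₗ[R] R) :=
  Submodule.span_le.2 fun _ ⟨_, hc⟩ => hT.sub_apply_eq_zero_of_mem h0 ha hb hc

end IsBimonotone

end Bimonotone

/-- If `T : X ⇉ X*` is bimonotone with `(0,0)` in its graph and
`x₁*, x₂* ∈ T(x)`, then `x₁*` and `x₂*` agree on the linear span of `dom T`. -/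
theorem stmt4 (X : Type*) [NormedAddCommGroup X] [NormedSpace ℝ X]
    (T : Set (X × (X →L[ℝ] ℝ)))
    (hbi : ∀ p ∈ T, ∀ q ∈ T, (p.2 - q.2) (p.1 - q.1) = 0)
    (h0 : ((0 : X), (0 : X →L[ℝ] ℝ)) ∈ T)
    (x : X) (x1star x2star : X →L[ℝ] ℝ)
    (h1 : (x, x1star) ∈ T) (h2 : (x, x2star) ∈ T) :
    ∀ v ∈ Submodule.span ℝ {y : X | ∃ ystar, (y, ystar) ∈ T},
      (x1star - x2star) v = 0 :=
  fun _ hv => IsBimonotone.span_dom_le_ker_sub hbi h0 h1 h2 hv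
end

section
/- Let X be a real normed space and let T be a bimonotone multivalued operator from X to X* such that (0, 0) belongs to the graph of T. Let (αᵢ)_{i∈I} and (βⱼ)_{j∈J} be finite families of real numbers, xᵢ ∈ dom T with sᵢ* ∈ T(xᵢ) for each i ∈ I, and yⱼ ∈ dom T with tⱼ* ∈ T(yⱼ) for each j ∈ J. If Σᵢ αᵢ xᵢ = Σⱼ βⱼ yⱼ, then the functionals Σᵢ αᵢ sᵢ* and Σⱼ βⱼ tⱼ* agree on the linear span of dom T, i.e. ⟨Σᵢ αᵢ sᵢ* - Σⱼ βⱼ tⱼ*, v⟩ = 0 for every v in the span of dom T. -/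
/-!
Bimonotonicity against `(0, 0)` gives `⟨s*, x⟩ = 0` on the graph, and expanding
`⟨s* - z*, x - z⟩ = 0` then gives the skew symmetry `⟨s*, z⟩ = -⟨z*, x⟩`. Hence at a point
`z ∈ dom T` with `z* ∈ T z`, the functional `∑ αᵢ sᵢ*` takes the value `-⟨z*, ∑ αᵢ xᵢ⟩`, which
depends only on `∑ αᵢ xᵢ`. So the two combinations agree on `dom T`, and thus on its span.
-/

open Finset

namespace Bimonotone

variable {𝕜 X : Type*} [CommRing 𝕜] [TopologicalSpace 𝕜] [IsTopologicalRing 𝕜]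
  [AddCommGroup X] [Module 𝕜 X] [TopologicalSpace X]

def IsBimonotone (T : Set (X × (X →L[𝕜] 𝕜))) : Prop :=
  ∀ p ∈ T, ∀ q ∈ T, (p.2 - q.2) (p.1 - q.1) = 0

variable {T : Set (X × (X →L[𝕜] 𝕜))}

theorem apply_self_eq_zero (hT : IsBimonotone T) (h0 : ((0 : X), (0 : X →L[𝕜] 𝕜)) ∈ T)
    {p : X × (X →L[𝕜] 𝕜)} (hp : p ∈ T) : p.2 p.1 = 0 := by
  simpa using hT p hp _ h0

theorem apply_eq_neg_apply (hT : IsBimonotone T) (h0 : ((0 : X), (0 : X →L[𝕜] 𝕜)) ∈ T)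
    {p q : X × (X →L[𝕜] 𝕜)} (hp : p ∈ T) (hq : q ∈ T) : p.2 q.1 = -q.2 p.1 := by
  have h := hT p hp q hq
  simp only [_root_.sub_apply, map_sub, apply_self_eq_zero hT h0 hp,
    apply_self_eq_zero hT h0 hq] at h
  linear_combination -h

theorem sum_smul_apply_eq_neg (hT : IsBimonotone T) (h0 : ((0 : X), (0 : X →L[𝕜] 𝕜)) ∈ T)
    {I : Type*} [Fintype I] (α : I → 𝕜) {x : I → X} {s : I → (X →L[𝕜] 𝕜)}
    (hs : ∀ i, (x i, s i) ∈ T) {z : X} {zs : X →L[𝕜] 𝕜} (hz : (z, zs) ∈ T) :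
    (∑ i, α i • s i) z = -zs (∑ i, α i • x i) := by
  simp only [_root_.sum_apply, _root_.smul_apply, map_sum, map_smul,
    ← sum_neg_distrib, ← smul_neg]
  exact sum_congr rfl fun i _ => congrArg (α i • ·) (apply_eq_neg_apply hT h0 (hs i) hz)

end Bimonotone

open Bimonotone

/-- For a bimonotone `T : X ⇉ X*` with `(0,0)` in its graph, if two finite
linear combinations of points of `dom T` coincide, then the corresponding linear combinations
of selections of `T` agree on the linear span of `dom T`. -/
theorem stmt5 (X : Type*) [NormedAddCommGroup X] [NormedSpace ℝ X]
    (T : Set (X × (X →L[ℝ] ℝ)))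
    (hbi : ∀ p ∈ T, ∀ q ∈ T, (p.2 - q.2) (p.1 - q.1) = 0)
    (h0 : ((0 : X), (0 : X →L[ℝ] ℝ)) ∈ T)
    (I J : Type*) [Fintype I] [Fintype J]
    (α : I → ℝ) (β : J → ℝ) (x : I → X) (y : J → X)
    (s : I → (X →L[ℝ] ℝ)) (t : J → (X →L[ℝ] ℝ))
    (hs : ∀ i, (x i, s i) ∈ T) (ht : ∀ j, (y j, t j) ∈ T)
    (hsum : ∑ i, α i • x i = ∑ j, β j • y j) :
    ∀ v ∈ Submodule.span ℝ {z : X | ∃ zstar, (z, zstar) ∈ T},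
      ((∑ i, α i • s i) - ∑ j, β j • t j) v = 0 := by
  have hdom : {z : X | ∃ zstar, (z, zstar) ∈ T} ⊆
      LinearMap.ker (((∑ i, α i • s i) - ∑ j, β j • t j : X →L[ℝ] ℝ) : X →ₗ[ℝ] ℝ) := by
    rintro z ⟨zs, hz⟩
    simp only [SetLike.mem_coe, LinearMap.mem_ker, ContinuousLinearMap.coe_coe,
      _root_.sub_apply, sum_smul_apply_eq_neg hbi h0 α hs hz,
      sum_smul_apply_eq_neg hbi h0 β ht hz, hsum, sub_self]
  exact fun v hv => Submodule.span_le.mpr hdom hv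
end
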